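/- arXiv:2502.03786 — 2 statements merged into one kernel-verified Lean document; each statement's English description precedes it below -/
import Mathlib

section
/- Let α,β∈ℝ with β≠0, let f:ℝ→ℝ be smooth, and let V(q₁,q₂)=exp(−4q₁/β)·f((αq₁+βq₂)/β). Then the associated bivector P̃ satisfies (P̃−2HP)dH=0 on ℝ⁴, i.e. for every i=1,…,4, Σ_j P̃^{ij} ∂H/∂x^j = 2H·X^i; consequently the vector field Y=2HX is bi-Hamiltonian, namely (2HP+P̃)dH = P d(2H²). -/
open Real

noncomputable section

/-- Partial derivative of `F` in the `k`-th coordinate direction at `x`. -/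
def pd (F : (Fin 4 → ℝ) → ℝ) (k : Fin 4) (x : Fin 4 → ℝ) : ℝ :=
  fderiv ℝ F x (Pi.single k 1)

/-- The canonical Poisson bivector on ℝ⁴. -/
def Pcan : Matrix (Fin 4) (Fin 4) ℝ :=
  !![0, 0, 1, 0; 0, 0, 0, 1; -1, 0, 0, 0; 0, -1, 0, 0]

/-- Lie derivative of a bivector field `T` along a vector field `Xf`:
`(L_X T)^{ij} = Σ_k ( X^k ∂T^{ij}/∂x^k − T^{kj} ∂X^i/∂x^k − T^{ik} ∂X^j/∂x^k )`. -/
def lieDerivBiv (Xf : (Fin 4 → ℝ) → Fin 4 → ℝ)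
    (T : (Fin 4 → ℝ) → Matrix (Fin 4) (Fin 4) ℝ)
    (i j : Fin 4) (x : Fin 4 → ℝ) : ℝ :=
  ∑ k, (Xf x k * pd (fun y => T y i j) k x
      - T x k j * pd (fun y => Xf y i) k x
      - T x i k * pd (fun y => Xf y j) k x)

/-- Lie derivative of a 2-form `ω` along a vector field `Xf`:
`(L_X ω)_{ij} = Σ_k ( X^k ∂ω_{ij}/∂x^k + ω_{kj} ∂X^k/∂x^i + ω_{ik} ∂X^k/∂x^j )`. -/
def lieDerivForm (Xf : (Fin 4 → ℝ) → Fin 4 → ℝ)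
    (ω : (Fin 4 → ℝ) → Matrix (Fin 4) (Fin 4) ℝ)
    (i j : Fin 4) (x : Fin 4 → ℝ) : ℝ :=
  ∑ k, (Xf x k * pd (fun y => ω y i j) k x
      + ω x k j * pd (fun y => Xf y k) i x
      + ω x i k * pd (fun y => Xf y k) j x)

/-- The Jacobiator of a bivector field `A`; `A` satisfies the Jacobi identity iff it
vanishes for all indices `i j k`. -/
def jac (A : (Fin 4 → ℝ) → Matrix (Fin 4) (Fin 4) ℝ)
    (i j k : Fin 4) (x : Fin 4 → ℝ) : ℝ :=
  ∑ l, (A x l i * pd (fun y => A y j k) l x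
      + A x l j * pd (fun y => A y k i) l x
      + A x l k * pd (fun y => A y i j) l x)

/-- The mixed Schouten bracket expression of two bivector fields `A` and `B`. -/
def mixedSchouten (A B : (Fin 4 → ℝ) → Matrix (Fin 4) (Fin 4) ℝ)
    (i j k : Fin 4) (x : Fin 4 → ℝ) : ℝ :=
  ∑ l, (A x l i * pd (fun y => B y j k) l x
      + A x l j * pd (fun y => B y k i) l x
      + A x l k * pd (fun y => B y i j) l x
      + B x l i * pd (fun y => A y j k) l x
      + B x l j * pd (fun y => A y k i) l x
      + B x l k * pd (fun y => A y i j) l x)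

/-- The Toda-type potential `V = exp(−4q₁/β) f((αq₁+βq₂)/β)`. -/
def VT (α β : ℝ) (f : ℝ → ℝ) (x : Fin 4 → ℝ) : ℝ :=
  Real.exp (-4 * x 0 / β) * f ((α * x 0 + β * x 1) / β)

/-- The Hamiltonian `H = (p₁² + p₂²)/2 + V`. -/
def HT (α β : ℝ) (f : ℝ → ℝ) (x : Fin 4 → ℝ) : ℝ :=
  ((x 2) ^ 2 + (x 3) ^ 2) / 2 + VT α β f x

/-- The Hamiltonian vector field `X = (p₁, p₂, −∂V/∂q₁, −∂V/∂q₂)`. -/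
def XT (α β : ℝ) (f : ℝ → ℝ) (x : Fin 4 → ℝ) : Fin 4 → ℝ :=
  ![x 2, x 3, -(pd (VT α β f) 0 x), -(pd (VT α β f) 1 x)]

/-- The invariant bivector `P̃` associated with the potential. -/
def PtT (α β : ℝ) (f : ℝ → ℝ) (x : Fin 4 → ℝ) : Matrix (Fin 4) (Fin 4) ℝ :=
  let p1 := x 2; let p2 := x 3
  let V1 := pd (VT α β f) 0 x
  let V2 := pd (VT α β f) 1 x
  let v := VT α β f x
  let e12 := α * p1 + β * p2
  let e13 := p1 ^ 2 - p2 ^ 2 - α * V2 + 2 * v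
  let e14 := 2 * p1 * p2 - β * V2
  let e23 := 2 * p1 * p2 + α * V1
  let e24 := -p1 ^ 2 + p2 ^ 2 + α * V2 - 2 * v
  let e34 := 2 * p1 * V2 - 2 * p2 * V1
  !![0, e12, e13, e14;
     -(e12), 0, e23, e24;
     -(e13), -(e23), 0, e34;
     -(e14), -(e24), -(e34), 0]

def LV (α β : ℝ) (f : ℝ → ℝ) (x : Fin 4 → ℝ) : (Fin 4 → ℝ) →L[ℝ] ℝ :=
  Real.exp (-4 * x 0 / β) • (deriv f ((α * x 0 + β * x 1) / β) •
        ((α/β : ℝ) • (ContinuousLinearMap.proj 0 : (Fin 4 → ℝ) →L[ℝ] ℝ)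
          + (β/β : ℝ) • (ContinuousLinearMap.proj 1 : (Fin 4 → ℝ) →L[ℝ] ℝ)))
    + f ((α * x 0 + β * x 1) / β) • ((Real.exp (-4 * x 0 / β)) •
        ((-4/β : ℝ) • (ContinuousLinearMap.proj 0 : (Fin 4 → ℝ) →L[ℝ] ℝ)))

lemma hasLV (α β : ℝ) (f : ℝ → ℝ) (hf : ContDiff ℝ (⊤ : ℕ∞) f) (x : Fin 4 → ℝ) :
    HasFDerivAt (VT α β f) (LV α β f x) x := by
  have h0 : HasFDerivAt (fun y : Fin 4 → ℝ => Real.exp (-4 * y 0 / β))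
      ((Real.exp (-4 * x 0 / β)) • ((-4/β : ℝ) • (ContinuousLinearMap.proj 0 : (Fin 4 → ℝ) →L[ℝ] ℝ))) x := by
    have heq : (fun y : Fin 4 → ℝ => Real.exp (-4 * y 0 / β))
        = fun y : Fin 4 → ℝ => Real.exp ((-4/β) * (ContinuousLinearMap.proj 0 : (Fin 4 → ℝ) →L[ℝ] ℝ) y) := by
      funext y; simp only [ContinuousLinearMap.proj_apply]; congr 1; ring
    have h := (((ContinuousLinearMap.proj 0 : (Fin 4 → ℝ) →L[ℝ] ℝ).hasFDerivAt (x := x)).const_mul (-4/β)).exp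
    rw [heq]
    have hx : (-4/β) * (ContinuousLinearMap.proj 0 : (Fin 4 → ℝ) →L[ℝ] ℝ) x = -4 * x 0 / β := by
      simp only [ContinuousLinearMap.proj_apply]; ring
    rw [← hx]
    exact h
  have hu : HasFDerivAt (fun y : Fin 4 → ℝ => (α * y 0 + β * y 1) / β)
      ((α/β : ℝ) • (ContinuousLinearMap.proj 0 : (Fin 4 → ℝ) →L[ℝ] ℝ)
        + (β/β : ℝ) • (ContinuousLinearMap.proj 1 : (Fin 4 → ℝ) →L[ℝ] ℝ)) x := by
    have heq : (fun y : Fin 4 → ℝ => (α * y 0 + β * y 1) / β)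
        = fun y : Fin 4 → ℝ => (α/β) * (ContinuousLinearMap.proj 0 : (Fin 4 → ℝ) →L[ℝ] ℝ) y
            + (β/β) * (ContinuousLinearMap.proj 1 : (Fin 4 → ℝ) →L[ℝ] ℝ) y := by
      funext y; simp only [ContinuousLinearMap.proj_apply]; ring
    rw [heq]
    exact (((ContinuousLinearMap.proj 0 : (Fin 4 → ℝ) →L[ℝ] ℝ).hasFDerivAt (x := x)).const_mul (α/β)).add
      (((ContinuousLinearMap.proj 1 : (Fin 4 → ℝ) →L[ℝ] ℝ).hasFDerivAt (x := x)).const_mul (β/β))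
  have hfd : HasFDerivAt (fun y : Fin 4 → ℝ => f ((α * y 0 + β * y 1) / β))
      (deriv f ((α * x 0 + β * x 1) / β) •
        ((α/β : ℝ) • (ContinuousLinearMap.proj 0 : (Fin 4 → ℝ) →L[ℝ] ℝ)
          + (β/β : ℝ) • (ContinuousLinearMap.proj 1 : (Fin 4 → ℝ) →L[ℝ] ℝ))) x :=
    (hf.differentiable (by simp) ((α * x 0 + β * x 1) / β)).hasDerivAt.comp_hasFDerivAt x hu
  exact h0.mul hfd

def LQ (x : Fin 4 → ℝ) : (Fin 4 → ℝ) →L[ℝ] ℝ :=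
  (1/2 : ℝ) • ((ContinuousLinearMap.proj 2 : (Fin 4 → ℝ) →L[ℝ] ℝ) x • (ContinuousLinearMap.proj 2 : (Fin 4 → ℝ) →L[ℝ] ℝ)
      + (ContinuousLinearMap.proj 2 : (Fin 4 → ℝ) →L[ℝ] ℝ) x • (ContinuousLinearMap.proj 2 : (Fin 4 → ℝ) →L[ℝ] ℝ)
      + ((ContinuousLinearMap.proj 3 : (Fin 4 → ℝ) →L[ℝ] ℝ) x • (ContinuousLinearMap.proj 3 : (Fin 4 → ℝ) →L[ℝ] ℝ)
        + (ContinuousLinearMap.proj 3 : (Fin 4 → ℝ) →L[ℝ] ℝ) x • (ContinuousLinearMap.proj 3 : (Fin 4 → ℝ) →L[ℝ] ℝ)))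

def LH (α β : ℝ) (f : ℝ → ℝ) (x : Fin 4 → ℝ) : (Fin 4 → ℝ) →L[ℝ] ℝ :=
  LQ x + LV α β f x

lemma hasLH (α β : ℝ) (f : ℝ → ℝ) (hf : ContDiff ℝ (⊤ : ℕ∞) f) (x : Fin 4 → ℝ) :
    HasFDerivAt (HT α β f) (LH α β f x) x := by
  have heq : HT α β f = fun y =>
      (1/2 : ℝ) * ((ContinuousLinearMap.proj 2 : (Fin 4 → ℝ) →L[ℝ] ℝ) y * (ContinuousLinearMap.proj 2 : (Fin 4 → ℝ) →L[ℝ] ℝ) y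
        + (ContinuousLinearMap.proj 3 : (Fin 4 → ℝ) →L[ℝ] ℝ) y * (ContinuousLinearMap.proj 3 : (Fin 4 → ℝ) →L[ℝ] ℝ) y)
      + VT α β f y := by
    funext y; simp only [HT, ContinuousLinearMap.proj_apply]; ring
  rw [heq]
  have h2 := ((ContinuousLinearMap.proj 2 : (Fin 4 → ℝ) →L[ℝ] ℝ).hasFDerivAt (x := x)).mul
    ((ContinuousLinearMap.proj 2 : (Fin 4 → ℝ) →L[ℝ] ℝ).hasFDerivAt (x := x))
  have h3 := ((ContinuousLinearMap.proj 3 : (Fin 4 → ℝ) →L[ℝ] ℝ).hasFDerivAt (x := x)).mul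
    ((ContinuousLinearMap.proj 3 : (Fin 4 → ℝ) →L[ℝ] ℝ).hasFDerivAt (x := x))
  exact ((h2.add h3).const_mul (1/2 : ℝ)).add (hasLV α β f hf x)

lemma pdVT_eq (α β : ℝ) (f : ℝ → ℝ) (hf : ContDiff ℝ (⊤ : ℕ∞) f) (x : Fin 4 → ℝ) (k : Fin 4) :
    pd (VT α β f) k x = LV α β f x (Pi.single k 1) := by
  rw [pd, (hasLV α β f hf x).fderiv]

lemma pdHT_eq (α β : ℝ) (f : ℝ → ℝ) (hf : ContDiff ℝ (⊤ : ℕ∞) f) (x : Fin 4 → ℝ) (k : Fin 4) :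
    pd (HT α β f) k x = LH α β f x (Pi.single k 1) := by
  rw [pd, (hasLH α β f hf x).fderiv]

lemma pdVT2 (α β : ℝ) (f : ℝ → ℝ) (hf : ContDiff ℝ (⊤ : ℕ∞) f) (x : Fin 4 → ℝ) :
    pd (VT α β f) 2 x = 0 := by
  rw [pdVT_eq α β f hf x]
  simp [LV, Pi.single_apply]

lemma pdVT3 (α β : ℝ) (f : ℝ → ℝ) (hf : ContDiff ℝ (⊤ : ℕ∞) f) (x : Fin 4 → ℝ) :
    pd (VT α β f) 3 x = 0 := by
  rw [pdVT_eq α β f hf x]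
  simp [LV, Pi.single_apply]

lemma pdVT_key (α β : ℝ) (hβ : β ≠ 0) (f : ℝ → ℝ) (hf : ContDiff ℝ (⊤ : ℕ∞) f) (x : Fin 4 → ℝ) :
    β * pd (VT α β f) 0 x = α * pd (VT α β f) 1 x - 4 * VT α β f x := by
  rw [pdVT_eq α β f hf x, pdVT_eq α β f hf x]
  simp only [LV, VT, ContinuousLinearMap.add_apply, ContinuousLinearMap.smul_apply,
    ContinuousLinearMap.proj_apply, Pi.single_apply, smul_eq_mul]
  norm_num
  field_simp
  ring

lemma pdHT0 (α β : ℝ) (f : ℝ → ℝ) (hf : ContDiff ℝ (⊤ : ℕ∞) f) (x : Fin 4 → ℝ) :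
    pd (HT α β f) 0 x = pd (VT α β f) 0 x := by
  rw [pdHT_eq α β f hf x, pdVT_eq α β f hf x, LH]
  simp [LQ, Pi.single_apply]

lemma pdHT1 (α β : ℝ) (f : ℝ → ℝ) (hf : ContDiff ℝ (⊤ : ℕ∞) f) (x : Fin 4 → ℝ) :
    pd (HT α β f) 1 x = pd (VT α β f) 1 x := by
  rw [pdHT_eq α β f hf x, pdVT_eq α β f hf x, LH]
  simp [LQ, Pi.single_apply]

lemma pdHT2 (α β : ℝ) (f : ℝ → ℝ) (hf : ContDiff ℝ (⊤ : ℕ∞) f) (x : Fin 4 → ℝ) :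
    pd (HT α β f) 2 x = x 2 := by
  rw [pdHT_eq α β f hf x, LH]
  have h := pdVT2 α β f hf x
  rw [pdVT_eq α β f hf x] at h
  simp [LQ, Pi.single_apply, h]
  ring

lemma pdHT3 (α β : ℝ) (f : ℝ → ℝ) (hf : ContDiff ℝ (⊤ : ℕ∞) f) (x : Fin 4 → ℝ) :
    pd (HT α β f) 3 x = x 3 := by
  rw [pdHT_eq α β f hf x, LH]
  have h := pdVT3 α β f hf x
  rw [pdVT_eq α β f hf x] at h
  simp [LQ, Pi.single_apply, h]
  ring

lemma pdH2 (α β : ℝ) (f : ℝ → ℝ) (hf : ContDiff ℝ (⊤ : ℕ∞) f) (x : Fin 4 → ℝ) (j : Fin 4) :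
    pd (fun y => 2 * (HT α β f y) ^ 2) j x = 4 * HT α β f x * pd (HT α β f) j x := by
  have h := hasLH α β f hf x
  have heq : (fun y => 2 * (HT α β f y) ^ 2) = fun y => 2 * (HT α β f y * HT α β f y) := by
    funext y; ring
  have h2 := (h.mul h).const_mul (2 : ℝ)
  rw [pd, heq, (show HasFDerivAt (fun y => 2 * (HT α β f y * HT α β f y)) _ x from h2).fderiv, pdHT_eq α β f hf x]
  simp only [ContinuousLinearMap.smul_apply, ContinuousLinearMap.add_apply, smul_eq_mul]
  ring

set_option maxHeartbeats 2000000 in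
/-- for `V = exp(−4q₁/β) f((αq₁+βq₂)/β)`, `(P̃ − 2HP)dH = 0`, i.e.
`Σ_j P̃^{ij} ∂H/∂x^j = 2H X^i`, and moreover `(2HP + P̃)dH = P d(2H²)`. -/
theorem statement17 (α β : ℝ) (hβ : β ≠ 0) (f : ℝ → ℝ) (hf : ContDiff ℝ (⊤ : ℕ∞) f) :
    ∀ (x : Fin 4 → ℝ) (i : Fin 4),
      (∑ j, PtT α β f x i j * pd (HT α β f) j x) = 2 * HT α β f x * XT α β f x i ∧
      (∑ j, (2 * HT α β f x * Pcan i j + PtT α β f x i j) * pd (HT α β f) j x) =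
        ∑ j, Pcan i j * pd (fun y => 2 * (HT α β f y) ^ 2) j x := by
  intro x i
  have h0 := pdHT0 α β f hf x
  have h1 := pdHT1 α β f hf x
  have h2 := pdHT2 α β f hf x
  have h3 := pdHT3 α β f hf x
  have hsq := pdH2 α β f hf x
  have hv1 : pd (VT α β f) 0 x = (α * pd (VT α β f) 1 x - 4 * VT α β f x) / β := by
    rw [eq_div_iff hβ]
    linear_combination pdVT_key α β hβ f hf x
  fin_cases i <;>
    refine ⟨?_, ?_⟩ <;>
    · simp only [Fin.sum_univ_four, hsq]
      simp only [PtT, XT, Pcan, h0, h1, h2, h3, Fin.reduceFinMk, Matrix.of_apply,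
        Matrix.cons_val', Matrix.cons_val_zero, Matrix.cons_val_one, Matrix.head_cons,
        Matrix.empty_val', Matrix.cons_val_fin_one, Matrix.head_fin_const, Fin.isValue,
        Matrix.cons_val_two, Matrix.cons_val_three, Matrix.tail_cons]
      simp only [hv1, HT]
      field_simp
      ring


end
end

section
/- Let α,β∈ℝ with β≠0, let f:ℝ→ℝ be smooth, and let V(q₁,q₂)=exp(−4q₁/β)·f((αq₁+βq₂)/β). Then the bivector P' = 2H·P + P̃ satisfies the Jacobi identity on ℝ⁴: for all indices i,j,k, Σ_l ( P'^{li} ∂P'^{jk}/∂x^l + P'^{lj} ∂P'^{ki}/∂x^l + P'^{lk} ∂P'^{ij}/∂x^l ) = 0; hence P' is an invariant Poisson bivector of the flow, and (P'−4HP)dH=0. -/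
open Real

noncomputable section

/-- The bivector `P' = 2H·P + P̃`. -/
def PT' (α β : ℝ) (f : ℝ → ℝ) (x : Fin 4 → ℝ) : Matrix (Fin 4) (Fin 4) ℝ :=
  Matrix.of fun i j => 2 * HT α β f x * Pcan i j + PtT α β f x i j

namespace S18

def pr (k : Fin 4) : (Fin 4 → ℝ) →L[ℝ] ℝ := ContinuousLinearMap.proj k

def S (l k : Fin 4) : ℝ := (Pi.single l 1 : Fin 4 → ℝ) k

lemma S_apply (l k : Fin 4) : S l k = if k = l then 1 else 0 := by
  rw [S, Pi.single_apply]

def W (a b : ℝ) (g : ℝ → ℝ) (x : Fin 4 → ℝ) : ℝ :=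
  Real.exp (b * x 0) * g (a * x 0 + x 1)

def dW (a b : ℝ) (g : ℝ → ℝ) (x : Fin 4 → ℝ) (l : Fin 4) : ℝ :=
  (b * W a b g x + a * W a b (deriv g) x) * S l 0 + W a b (deriv g) x * S l 1

lemma pd_eq {F : (Fin 4 → ℝ) → ℝ} {D : (Fin 4 → ℝ) →L[ℝ] ℝ} {x : Fin 4 → ℝ}
    (h : HasFDerivAt F D x) (l : Fin 4) : pd F l x = D (Pi.single l 1) := by
  rw [pd, h.fderiv]

lemma pd_neg (F : (Fin 4 → ℝ) → ℝ) (l : Fin 4) (x : Fin 4 → ℝ) :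
    pd (fun y => -(F y)) l x = - pd F l x := by
  simp [pd, fderiv_neg]

lemma hproj (k : Fin 4) (x : Fin 4 → ℝ) :
    HasFDerivAt (fun y : Fin 4 → ℝ => y k) (pr k) x := by
  exact (pr k).hasFDerivAt (x := x)

lemma W_hasFDerivAt (a b : ℝ) (g : ℝ → ℝ) (hg : Differentiable ℝ g) (x : Fin 4 → ℝ) :
    HasFDerivAt (W a b g)
      ((Real.exp (b * x 0)) • ((deriv g (a * x 0 + x 1)) • (a • pr 0 + pr 1))
        + (g (a * x 0 + x 1)) • ((Real.exp (b * x 0)) • (b • pr 0))) x := by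
  have h1 : HasFDerivAt (fun y : Fin 4 → ℝ => Real.exp (b * y 0))
      ((Real.exp (b * x 0)) • (b • pr 0)) x := by
    have hl : HasFDerivAt (fun y : Fin 4 → ℝ => b * y 0) (b • pr 0) x := by
      exact (b • pr 0).hasFDerivAt (x := x)
    exact (Real.hasDerivAt_exp (b * x 0)).comp_hasFDerivAt x hl
  have h2 : HasFDerivAt (fun y : Fin 4 → ℝ => g (a * y 0 + y 1))
      ((deriv g (a * x 0 + x 1)) • (a • pr 0 + pr 1)) x := by
    have hl : HasFDerivAt (fun y : Fin 4 → ℝ => a * y 0 + y 1) (a • pr 0 + pr 1) x := by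
      exact (a • pr 0 + pr 1).hasFDerivAt (x := x)
    exact ((hg (a * x 0 + x 1)).hasDerivAt).comp_hasFDerivAt x hl
  exact h1.mul h2

lemma pd_W (a b : ℝ) (g : ℝ → ℝ) (hg : Differentiable ℝ g) (l : Fin 4) (x : Fin 4 → ℝ) :
    pd (W a b g) l x = dW a b g x l := by
  rw [pd_eq (W_hasFDerivAt a b g hg x)]
  simp [pr, dW, S, W]
  ring

section main
variable (α β : ℝ) (f : ℝ → ℝ)

lemma VT_eq (hβ : β ≠ 0) : VT α β f = W (α/β) (-4/β) f := by
  funext x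
  rw [VT, W, show -4 * x 0 / β = -4/β * x 0 by ring,
    show (α * x 0 + β * x 1) / β = α/β * x 0 + x 1 by field_simp]

lemma pd_VT0 (hβ : β ≠ 0) (hd0 : Differentiable ℝ f) (y : Fin 4 → ℝ) :
    pd (VT α β f) 0 y = -4/β * W (α/β) (-4/β) f y + α/β * W (α/β) (-4/β) (deriv f) y := by
  rw [VT_eq α β f hβ, pd_W _ _ _ hd0]
  simp [dW, S_apply]

lemma pd_VT1 (hβ : β ≠ 0) (hd0 : Differentiable ℝ f) (y : Fin 4 → ℝ) :
    pd (VT α β f) 1 y = W (α/β) (-4/β) (deriv f) y := by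
  rw [VT_eq α β f hβ, pd_W _ _ _ hd0]
  simp [dW, S_apply]

lemma PTval (hβ : β ≠ 0) (hd0 : Differentiable ℝ f) (x : Fin 4 → ℝ) :
    PT' α β f x =
      let v := W (α/β) (-4/β) f x
      let v1 := W (α/β) (-4/β) (deriv f) x
      let e01 := α * x 2 + β * x 3
      let e02 := 2 * (x 2 * x 2) + 4 * v - α * v1
      let e03 := 2 * x 2 * x 3 - β * v1
      let e12 := 2 * x 2 * x 3 + α * (-4/β * v + α/β * v1)
      let e13 := 2 * (x 3 * x 3) + α * v1
      let e23 := 2 * x 2 * v1 - 2 * x 3 * (-4/β * v + α/β * v1)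
      !![0, e01, e02, e03;
         -e01, 0, e12, e13;
         -e02, -e12, 0, e23;
         -e03, -e13, -e23, 0] := by
  ext i j
  fin_cases i <;> fin_cases j <;>
    (simp only [PT', Matrix.of_apply, PtT, HT, Pcan]
     simp only [pd_VT0 α β f hβ hd0, pd_VT1 α β f hβ hd0]
     simp only [VT_eq α β f hβ]
     norm_num [Matrix.cons_val_zero, Matrix.cons_val_one, Matrix.head_cons,
       Matrix.cons_val', Matrix.head_fin_const, Matrix.empty_val']
     try ring)


-- entry functions
lemma fun01 (hβ : β ≠ 0) (hd0 : Differentiable ℝ f) :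
    (fun y => PT' α β f y 0 1) = (fun y : Fin 4 → ℝ => α * y 2 + β * y 3) := by
  funext y; rw [PTval α β f hβ hd0 y]; norm_num

lemma fun02 (hβ : β ≠ 0) (hd0 : Differentiable ℝ f) :
    (fun y => PT' α β f y 0 2) = (fun y : Fin 4 → ℝ =>
      2 * (y 2 * y 2) + 4 * W (α/β) (-4/β) f y - α * W (α/β) (-4/β) (deriv f) y) := by
  funext y; rw [PTval α β f hβ hd0 y]; norm_num [Matrix.cons_val_two, Matrix.cons_val_three, Matrix.vecHead, Matrix.vecTail]

lemma fun03 (hβ : β ≠ 0) (hd0 : Differentiable ℝ f) :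
    (fun y => PT' α β f y 0 3) = (fun y : Fin 4 → ℝ =>
      2 * (y 2 * y 3) - β * W (α/β) (-4/β) (deriv f) y) := by
  funext y; rw [PTval α β f hβ hd0 y]; norm_num [Matrix.cons_val_two, Matrix.cons_val_three, Matrix.vecHead, Matrix.vecTail]; ring

lemma fun12 (hβ : β ≠ 0) (hd0 : Differentiable ℝ f) :
    (fun y => PT' α β f y 1 2) = (fun y : Fin 4 → ℝ =>
      2 * (y 2 * y 3) + α * (-4/β * W (α/β) (-4/β) f y + α/β * W (α/β) (-4/β) (deriv f) y)) := by
  funext y; rw [PTval α β f hβ hd0 y]; norm_num [Matrix.cons_val_two, Matrix.cons_val_three, Matrix.vecHead, Matrix.vecTail]; ring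

lemma fun13 (hβ : β ≠ 0) (hd0 : Differentiable ℝ f) :
    (fun y => PT' α β f y 1 3) = (fun y : Fin 4 → ℝ =>
      2 * (y 3 * y 3) + α * W (α/β) (-4/β) (deriv f) y) := by
  funext y; rw [PTval α β f hβ hd0 y]; norm_num [Matrix.cons_val_two, Matrix.cons_val_three, Matrix.vecHead, Matrix.vecTail]

lemma fun23 (hβ : β ≠ 0) (hd0 : Differentiable ℝ f) :
    (fun y => PT' α β f y 2 3) = (fun y : Fin 4 → ℝ =>
      2 * (y 2 * W (α/β) (-4/β) (deriv f) y)
      - 2 * (y 3 * (-4/β * W (α/β) (-4/β) f y + α/β * W (α/β) (-4/β) (deriv f) y))) := by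
  funext y; rw [PTval α β f hβ hd0 y]; norm_num [Matrix.cons_val_two, Matrix.cons_val_three, Matrix.vecHead, Matrix.vecTail]; ring

-- pd of entries
lemma pd01 (hβ : β ≠ 0) (hd0 : Differentiable ℝ f) (l : Fin 4) (x : Fin 4 → ℝ) :
    pd (fun y => PT' α β f y 0 1) l x = α * S l 2 + β * S l 3 := by
  rw [fun01 α β f hβ hd0]
  have h := ((hproj 2 x).const_mul α).add ((hproj 3 x).const_mul β)
  refine (pd_eq h l).trans ?_; simp [pr, S]

lemma pd02 (hβ : β ≠ 0) (hd0 : Differentiable ℝ f) (hd1 : Differentiable ℝ (deriv f))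
    (l : Fin 4) (x : Fin 4 → ℝ) :
    pd (fun y => PT' α β f y 0 2) l x =
      4 * x 2 * S l 2 + 4 * dW (α/β) (-4/β) f x l - α * dW (α/β) (-4/β) (deriv f) x l := by
  rw [fun02 α β f hβ hd0]
  have h := ((((hproj 2 x).mul (hproj 2 x)).const_mul (2:ℝ)).add
      ((W_hasFDerivAt (α/β) (-4/β) f hd0 x).const_mul (4:ℝ))).sub
      ((W_hasFDerivAt (α/β) (-4/β) (deriv f) hd1 x).const_mul α)
  refine (pd_eq h l).trans ?_; simp [pr, dW, S, W]; ring

lemma pd03 (hβ : β ≠ 0) (hd0 : Differentiable ℝ f) (hd1 : Differentiable ℝ (deriv f))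
    (l : Fin 4) (x : Fin 4 → ℝ) :
    pd (fun y => PT' α β f y 0 3) l x =
      2 * x 3 * S l 2 + 2 * x 2 * S l 3 - β * dW (α/β) (-4/β) (deriv f) x l := by
  rw [fun03 α β f hβ hd0]
  have h := (((hproj 2 x).mul (hproj 3 x)).const_mul (2:ℝ)).sub
      ((W_hasFDerivAt (α/β) (-4/β) (deriv f) hd1 x).const_mul β)
  refine (pd_eq h l).trans ?_; simp [pr, dW, S, W]; ring

lemma pd12 (hβ : β ≠ 0) (hd0 : Differentiable ℝ f) (hd1 : Differentiable ℝ (deriv f))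
    (l : Fin 4) (x : Fin 4 → ℝ) :
    pd (fun y => PT' α β f y 1 2) l x =
      2 * x 3 * S l 2 + 2 * x 2 * S l 3
      + α * (-4/β * dW (α/β) (-4/β) f x l + α/β * dW (α/β) (-4/β) (deriv f) x l) := by
  rw [fun12 α β f hβ hd0]
  have h := (((hproj 2 x).mul (hproj 3 x)).const_mul (2:ℝ)).add
      ((((W_hasFDerivAt (α/β) (-4/β) f hd0 x).const_mul (-4/β)).add
        ((W_hasFDerivAt (α/β) (-4/β) (deriv f) hd1 x).const_mul (α/β))).const_mul α)
  refine (pd_eq h l).trans ?_; simp [pr, dW, S, W]; ring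

lemma pd13 (hβ : β ≠ 0) (hd0 : Differentiable ℝ f) (hd1 : Differentiable ℝ (deriv f))
    (l : Fin 4) (x : Fin 4 → ℝ) :
    pd (fun y => PT' α β f y 1 3) l x =
      4 * x 3 * S l 3 + α * dW (α/β) (-4/β) (deriv f) x l := by
  rw [fun13 α β f hβ hd0]
  have h := (((hproj 3 x).mul (hproj 3 x)).const_mul (2:ℝ)).add
      ((W_hasFDerivAt (α/β) (-4/β) (deriv f) hd1 x).const_mul α)
  refine (pd_eq h l).trans ?_; simp [pr, dW, S, W]; ring

lemma pd23 (hβ : β ≠ 0) (hd0 : Differentiable ℝ f) (hd1 : Differentiable ℝ (deriv f))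
    (l : Fin 4) (x : Fin 4 → ℝ) :
    pd (fun y => PT' α β f y 2 3) l x =
      2 * (W (α/β) (-4/β) (deriv f) x * S l 2 + x 2 * dW (α/β) (-4/β) (deriv f) x l)
      - 2 * ((-4/β * W (α/β) (-4/β) f x + α/β * W (α/β) (-4/β) (deriv f) x) * S l 3
          + x 3 * (-4/β * dW (α/β) (-4/β) f x l + α/β * dW (α/β) (-4/β) (deriv f) x l)) := by
  rw [fun23 α β f hβ hd0]
  have h := (((hproj 2 x).mul (W_hasFDerivAt (α/β) (-4/β) (deriv f) hd1 x)).const_mul (2:ℝ)).sub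
      (((hproj 3 x).mul (((W_hasFDerivAt (α/β) (-4/β) f hd0 x).const_mul (-4/β)).add
        ((W_hasFDerivAt (α/β) (-4/β) (deriv f) hd1 x).const_mul (α/β)))).const_mul (2:ℝ))
  refine (pd_eq h l).trans ?_; simp [pr, dW, S, W]; ring

lemma pd_HT (hβ : β ≠ 0) (hd0 : Differentiable ℝ f) (l : Fin 4) (x : Fin 4 → ℝ) :
    pd (HT α β f) l x = x 2 * S l 2 + x 3 * S l 3 + dW (α/β) (-4/β) f x l := by
  have hfe : HT α β f = (fun y : Fin 4 → ℝ =>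
      (1/2:ℝ) * (y 2 * y 2 + y 3 * y 3) + W (α/β) (-4/β) f y) := by
    funext y; rw [HT, VT_eq α β f hβ]; ring
  rw [hfe]
  have h := ((((hproj 2 x).mul (hproj 2 x)).add ((hproj 3 x).mul (hproj 3 x))).const_mul (1/2:ℝ)).add
      (W_hasFDerivAt (α/β) (-4/β) f hd0 x)
  refine (pd_eq h l).trans ?_; simp [pr, dW, S, W]; ring

end main

lemma jac_cyc (A : (Fin 4 → ℝ) → Matrix (Fin 4) (Fin 4) ℝ) (i j k : Fin 4) (x : Fin 4 → ℝ) :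
    jac A i j k x = jac A j k i x :=
  Finset.sum_congr rfl (fun l _ => by ring)

lemma jac_swap23 (A : (Fin 4 → ℝ) → Matrix (Fin 4) (Fin 4) ℝ)
    (hA : ∀ (y : Fin 4 → ℝ) (i j : Fin 4), A y j i = - A y i j)
    (i j k : Fin 4) (x : Fin 4 → ℝ) :
    jac A i j k x = - jac A i k j x := by
  unfold jac
  rw [← Finset.sum_neg_distrib]
  refine Finset.sum_congr rfl (fun l _ => ?_)
  have h1 : pd (fun y => A y k j) l x = - pd (fun y => A y j k) l x := by
    rw [show (fun y => A y k j) = (fun y => -(A y j k)) from funext fun y => hA y j k, pd_neg]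
  have h2 : pd (fun y => A y j i) l x = - pd (fun y => A y i j) l x := by
    rw [show (fun y => A y j i) = (fun y => -(A y i j)) from funext fun y => hA y i j, pd_neg]
  have h3 : pd (fun y => A y i k) l x = - pd (fun y => A y k i) l x := by
    rw [show (fun y => A y i k) = (fun y => -(A y k i)) from funext fun y => hA y k i, pd_neg]
  rw [h1, h2, h3]; ring

lemma PT'_antisym (α β : ℝ) (f : ℝ → ℝ) (y : Fin 4 → ℝ) (i j : Fin 4) :
    PT' α β f y j i = - PT' α β f y i j := by
  fin_cases i <;> fin_cases j <;>
    (norm_num [PT', PtT, Pcan, Matrix.of_apply]; try ring)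

set_option maxHeartbeats 2000000 in
lemma jacC012 (α β : ℝ) (f : ℝ → ℝ) (hβ : β ≠ 0) (hd0 : Differentiable ℝ f)
    (hd1 : Differentiable ℝ (deriv f)) (x : Fin 4 → ℝ)
    (hA : ∀ (y : Fin 4 → ℝ) (i j : Fin 4), PT' α β f y j i = - PT' α β f y i j) :
    jac (PT' α β f) 0 1 2 x = 0 := by
    simp only [jac, Fin.sum_univ_four]
    rw [show (fun y => PT' α β f y 2 0) = (fun y => -(PT' α β f y 0 2)) from funext fun y => hA y 0 2]
    simp only [pd_neg]
    simp only [pd01 α β f hβ hd0, pd02 α β f hβ hd0 hd1, pd12 α β f hβ hd0 hd1]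
    rw [PTval α β f hβ hd0 x]
    simp [S_apply, dW, Matrix.cons_val_zero, Matrix.cons_val_one, Matrix.head_cons]
    field_simp
    ring

set_option maxHeartbeats 2000000 in
lemma jacC013 (α β : ℝ) (f : ℝ → ℝ) (hβ : β ≠ 0) (hd0 : Differentiable ℝ f)
    (hd1 : Differentiable ℝ (deriv f)) (x : Fin 4 → ℝ)
    (hA : ∀ (y : Fin 4 → ℝ) (i j : Fin 4), PT' α β f y j i = - PT' α β f y i j) :
    jac (PT' α β f) 0 1 3 x = 0 := by
    simp only [jac, Fin.sum_univ_four]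
    rw [show (fun y => PT' α β f y 3 0) = (fun y => -(PT' α β f y 0 3)) from funext fun y => hA y 0 3]
    simp only [pd_neg]
    simp only [pd01 α β f hβ hd0, pd03 α β f hβ hd0 hd1, pd13 α β f hβ hd0 hd1]
    rw [PTval α β f hβ hd0 x]
    simp [S_apply, dW, Matrix.cons_val_zero, Matrix.cons_val_one, Matrix.head_cons]
    field_simp
    ring

set_option maxHeartbeats 2000000 in
lemma jacC023 (α β : ℝ) (f : ℝ → ℝ) (hβ : β ≠ 0) (hd0 : Differentiable ℝ f)
    (hd1 : Differentiable ℝ (deriv f)) (x : Fin 4 → ℝ)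
    (hA : ∀ (y : Fin 4 → ℝ) (i j : Fin 4), PT' α β f y j i = - PT' α β f y i j) :
    jac (PT' α β f) 0 2 3 x = 0 := by
    simp only [jac, Fin.sum_univ_four]
    rw [show (fun y => PT' α β f y 3 0) = (fun y => -(PT' α β f y 0 3)) from funext fun y => hA y 0 3]
    simp only [pd_neg]
    simp only [pd02 α β f hβ hd0 hd1, pd03 α β f hβ hd0 hd1, pd23 α β f hβ hd0 hd1]
    rw [PTval α β f hβ hd0 x]
    simp [S_apply, dW, Matrix.cons_val_zero, Matrix.cons_val_one, Matrix.head_cons]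
    field_simp
    ring

set_option maxHeartbeats 2000000 in
lemma jacC123 (α β : ℝ) (f : ℝ → ℝ) (hβ : β ≠ 0) (hd0 : Differentiable ℝ f)
    (hd1 : Differentiable ℝ (deriv f)) (x : Fin 4 → ℝ)
    (hA : ∀ (y : Fin 4 → ℝ) (i j : Fin 4), PT' α β f y j i = - PT' α β f y i j) :
    jac (PT' α β f) 1 2 3 x = 0 := by
    simp only [jac, Fin.sum_univ_four]
    rw [show (fun y => PT' α β f y 3 1) = (fun y => -(PT' α β f y 1 3)) from funext fun y => hA y 1 3]
    simp only [pd_neg]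
    simp only [pd12 α β f hβ hd0 hd1, pd13 α β f hβ hd0 hd1, pd23 α β f hβ hd0 hd1]
    rw [PTval α β f hβ hd0 x]
    simp [S_apply, dW, Matrix.cons_val_zero, Matrix.cons_val_one, Matrix.head_cons]
    field_simp
    ring

set_option maxHeartbeats 2000000 in
lemma rowsLemma (α β : ℝ) (f : ℝ → ℝ) (hβ : β ≠ 0) (hd0 : Differentiable ℝ f)
    (x : Fin 4 → ℝ) (i : Fin 4) :
    ∑ j, (PT' α β f x i j - 4 * HT α β f x * Pcan i j) * pd (HT α β f) j x = 0 := by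
  fin_cases i <;>
    (simp only [Fin.sum_univ_four]
     rw [PTval α β f hβ hd0 x]
     simp only [pd_HT α β f hβ hd0]
     simp [HT, VT_eq α β f hβ, Pcan, S_apply, dW, Matrix.vecHead, Matrix.vecTail,
       Matrix.cons_val_zero, Matrix.cons_val_one, Matrix.head_cons]
     field_simp
     ring)

end S18

set_option maxHeartbeats 4000000 in
open S18 in
/-- for `V = exp(−4q₁/β) f((αq₁+βq₂)/β)`, the bivector `P' = 2H·P + P̃`
satisfies the Jacobi identity on ℝ⁴, and `(P' − 4HP)dH = 0`. -/
theorem statement18 (α β : ℝ) (hβ : β ≠ 0) (f : ℝ → ℝ) (hf : ContDiff ℝ (⊤ : ℕ∞) f) :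
    ∀ x : Fin 4 → ℝ,
      (∀ i j k : Fin 4, jac (PT' α β f) i j k x = 0) ∧
      (∀ i : Fin 4,
        ∑ j, (PT' α β f x i j - 4 * HT α β f x * Pcan i j) * pd (HT α β f) j x = 0) := by
  intro x
  have hd0 : Differentiable ℝ f := hf.differentiable (by simp)
  have hd1 : Differentiable ℝ (deriv f) :=
    ((contDiff_infty_iff_deriv.mp (hf.of_le (by simp))).2).differentiable (by simp)
  have hA : ∀ (y : Fin 4 → ℝ) (i j : Fin 4), PT' α β f y j i = - PT' α β f y i j :=
    fun y i j => S18.PT'_antisym α β f y i j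
  have swap : ∀ i j k : Fin 4, jac (PT' α β f) i j k x = - jac (PT' α β f) i k j x :=
    fun i j k => S18.jac_swap23 _ hA i j k x
  have cyc : ∀ i j k : Fin 4, jac (PT' α β f) i j k x = jac (PT' α β f) j k i x :=
    fun i j k => S18.jac_cyc _ i j k x
  have z2 : ∀ i j : Fin 4, jac (PT' α β f) i j j x = 0 := by
    intro i j; have h := swap i j j; linarith
  have z1 : ∀ i j : Fin 4, jac (PT' α β f) i i j x = 0 := by
    intro i j; rw [cyc, cyc]; exact z2 j i
  have z3 : ∀ i j : Fin 4, jac (PT' α β f) i j i x = 0 := by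
    intro i j; rw [cyc]; exact z2 j i
  have C012 : jac (PT' α β f) 0 1 2 x = 0 := S18.jacC012 α β f hβ hd0 hd1 x hA
  have C013 : jac (PT' α β f) 0 1 3 x = 0 := S18.jacC013 α β f hβ hd0 hd1 x hA
  have C023 : jac (PT' α β f) 0 2 3 x = 0 := S18.jacC023 α β f hβ hd0 hd1 x hA
  have C123 : jac (PT' α β f) 1 2 3 x = 0 := S18.jacC123 α β f hβ hd0 hd1 x hA
  have C021 : jac (PT' α β f) 0 2 1 x = 0 := by
    rw [swap 0 2 1]; simp [C012]
  have C120 : jac (PT' α β f) 1 2 0 x = 0 := by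
    rw [cyc 1 2 0, cyc 2 0 1]; exact C012
  have C201 : jac (PT' α β f) 2 0 1 x = 0 := by
    rw [cyc 2 0 1]; exact C012
  have C102 : jac (PT' α β f) 1 0 2 x = 0 := by
    rw [cyc 1 0 2]; exact C021
  have C210 : jac (PT' α β f) 2 1 0 x = 0 := by
    rw [cyc 2 1 0, cyc 1 0 2]; exact C021
  have C031 : jac (PT' α β f) 0 3 1 x = 0 := by
    rw [swap 0 3 1]; simp [C013]
  have C130 : jac (PT' α β f) 1 3 0 x = 0 := by
    rw [cyc 1 3 0, cyc 3 0 1]; exact C013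
  have C301 : jac (PT' α β f) 3 0 1 x = 0 := by
    rw [cyc 3 0 1]; exact C013
  have C103 : jac (PT' α β f) 1 0 3 x = 0 := by
    rw [cyc 1 0 3]; exact C031
  have C310 : jac (PT' α β f) 3 1 0 x = 0 := by
    rw [cyc 3 1 0, cyc 1 0 3]; exact C031
  have C032 : jac (PT' α β f) 0 3 2 x = 0 := by
    rw [swap 0 3 2]; simp [C023]
  have C230 : jac (PT' α β f) 2 3 0 x = 0 := by
    rw [cyc 2 3 0, cyc 3 0 2]; exact C023
  have C302 : jac (PT' α β f) 3 0 2 x = 0 := by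
    rw [cyc 3 0 2]; exact C023
  have C203 : jac (PT' α β f) 2 0 3 x = 0 := by
    rw [cyc 2 0 3]; exact C032
  have C320 : jac (PT' α β f) 3 2 0 x = 0 := by
    rw [cyc 3 2 0, cyc 2 0 3]; exact C032
  have C132 : jac (PT' α β f) 1 3 2 x = 0 := by
    rw [swap 1 3 2]; simp [C123]
  have C231 : jac (PT' α β f) 2 3 1 x = 0 := by
    rw [cyc 2 3 1, cyc 3 1 2]; exact C123
  have C312 : jac (PT' α β f) 3 1 2 x = 0 := by
    rw [cyc 3 1 2]; exact C123
  have C213 : jac (PT' α β f) 2 1 3 x = 0 := by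
    rw [cyc 2 1 3]; exact C132
  have C321 : jac (PT' α β f) 3 2 1 x = 0 := by
    rw [cyc 3 2 1, cyc 2 1 3]; exact C132
  refine ⟨?_, ?_⟩
  · intro i j k
    fin_cases i <;> fin_cases j <;> fin_cases k
    exacts [z1 0 0, z1 0 1, z1 0 2, z1 0 3, z3 0 1, z2 0 1, C012, C013, z3 0 2, C021, z2 0 2, C023, z3 0 3, C031, C032, z2 0 3, z2 1 0, z3 1 0, C102, C103, z1 1 0, z1 1 1, z1 1 2, z1 1 3, C120, z3 1 2, z2 1 2, C123, C130, z3 1 3, C132, z2 1 3, z2 2 0, C201, z3 2 0, C203, C210, z2 2 1, z3 2 1, C213, z1 2 0, z1 2 1, z1 2 2, z1 2 3, C230, C231, z3 2 3, z2 2 3, z2 3 0, C301, C302, z3 3 0, C310, z2 3 1, C312, z3 3 1, C320, C321, z2 3 2, z3 3 2, z1 3 0, z1 3 1, z1 3 2, z1 3 3]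
  · intro i
    exact S18.rowsLemma α β f hβ hd0 x i


end
end
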